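/- Every finite digraph whose missing graph is a cycle of length 3 (C₃) has a vertex v with the second neighborhood property, i.e. |N⁺(v)| ≤ |N⁺⁺(v)|. -/

import Mathlib

/-!
The median-order argument of Havet and Thomassé, in its extension to digraphs with missing edges.
Call `(u, v)` a good orientation of `{u, v}` if every in-neighbour of `u` reaches `v` in at most two
steps. When no endpoint of a missing edge dominates another one (as for a missing `C₃`, whose
vertices are pairwise non-adjacent), every missing edge has a good orientation. Let `f` be the last
vertex of a median order of `D` completed by the good orientations. Cutting the order at the
vertices outside `N⁺(f) ∪ N⁺⁺(f)`, each such vertex dominates (in the completion) the vertices of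
`N⁺(f)` in the interval before it, and is dominated only by vertices of `N⁺⁺(f)` there; the
feedback property of median orders then gives at least as many vertices of `N⁺⁺(f)` as of `N⁺(f)`
in every interval.
-/

/-- First out-neighborhood of `v` in the digraph with arc relation `E`. -/
def Nplus {V : Type*} (E : V → V → Prop) (v : V) : Set V := {u | E v u}

/-- Second out-neighborhood: vertices at directed distance exactly 2 from `v`. -/
def Nplusplus {V : Type*} (E : V → V → Prop) (v : V) : Set V :=
  {u | u ∉ Nplus E v ∧ u ≠ v ∧ ∃ w ∈ Nplus E v, E w u}

/-- `v` has the second neighborhood property. -/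
def HasSNP {V : Type*} (E : V → V → Prop) (v : V) : Prop :=
  (Nplus E v).ncard ≤ (Nplusplus E v).ncard

/-- `{x, y}` is a missing edge of the digraph `E`. -/
def IsMissingEdge {V : Type*} (E : V → V → Prop) (x y : V) : Prop :=
  x ≠ y ∧ ¬ E x y ∧ ¬ E y x

/-- The ordered missing edge `(x₁, y₁)` loses to the ordered missing edge `(x₂, y₂)`. -/
def OLoses {V : Type*} (E : V → V → Prop) (x₁ y₁ x₂ y₂ : V) : Prop :=
  E x₁ x₂ ∧ y₂ ∉ Nplus E x₁ ∪ Nplusplus E x₁ ∧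
  E y₁ y₂ ∧ x₂ ∉ Nplus E y₁ ∪ Nplusplus E y₁

/-- The missing edge `{a, b}` loses to the missing edge `{c, d}`:
some ordering of the endpoints satisfies the ordered losing relation. -/
def Loses {V : Type*} (E : V → V → Prop) (a b c d : V) : Prop :=
  OLoses E a b c d ∨ OLoses E a b d c ∨ OLoses E b a c d ∨ OLoses E b a d c

/-- The missing edge `{a, b}` is good. -/
def Good {V : Type*} (E : V → V → Prop) (a b : V) : Prop :=
  (∀ v, v ≠ a → v ≠ b → E v a → b ∈ Nplus E v ∪ Nplusplus E v) ∨
  (∀ v, v ≠ a → v ≠ b → E v b → a ∈ Nplus E v ∪ Nplusplus E v)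

/-- Arc of the dependency digraph Δ: the missing edge `e` loses to the missing edge `f`. -/
def DeltaArc {V : Type*} (E : V → V → Prop) (e f : Sym2 V) : Prop :=
  ∃ a b c d : V, e = s(a, b) ∧ f = s(c, d) ∧
    IsMissingEdge E a b ∧ IsMissingEdge E c d ∧ OLoses E a b c d

namespace List

variable {α : Type*}

theorem countP_mem_eq_ncard {S : Set α} [DecidablePred (· ∈ S)] {l : List α} (hl : l.Nodup)
    (hS : ∀ x ∈ S, x ∈ l) : l.countP (· ∈ S) = S.ncard := by
  classical
  have hS' : S = ↑(l.filter (· ∈ S)).toFinset := by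
    ext x
    simpa using fun hx => hS x hx
  rw [countP_eq_length_filter, ← toFinset_card_of_nodup (hl.filter _), ← Set.ncard_coe_finset,
    ← hS']

theorem countP_le_countP_of_blocks {p q s : α → Prop} [DecidablePred p] [DecidablePred q]
    {l : List α} (hs : ∀ x, s x → ¬ p x)
    (hblock : ∀ Z m u C, l = Z ++ m ++ u :: C → s u → (∀ x ∈ m, ¬ s x) →
      m.countP (p ·) ≤ m.countP (q ·))
    {A : List α} {u : α} {C : List α} (hl : l = A ++ u :: C) (hu : s u) :
    A.countP (p ·) ≤ A.countP (q ·) := by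
  suffices ∀ A m u C, l = A ++ m ++ u :: C → s u → (∀ x ∈ m, ¬ s x) →
      (A ++ m).countP (p ·) ≤ (A ++ m).countP (q ·) by
    simpa using this A [] u C (by simpa using hl) hu (by simp)
  intro A
  induction A using List.reverseRecOn with
  | nil => exact fun m u C hl hu hm => by simpa using hblock [] m u C hl hu hm
  | append_singleton A y ih =>
    intro m u C hl hu hm
    by_cases hy : s y
    · have hA := ih [] y (m ++ u :: C) (by simp [hl]) hy (by simp)
      have hm := hblock (A ++ [y]) m u C hl hu hm
      simp only [append_nil, countP_append, countP_singleton, hs y hy, decide_false,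
        Bool.false_eq_true, if_false] at hA hm ⊢
      omega
    · simpa using ih (y :: m) u C (by simp [hl]) hu (forall_mem_cons.2 ⟨hy, hm⟩)

end List

section MedianOrder

variable {α : Type*} (R : α → α → Prop) [DecidableRel R]

def forwardArcs : List α → ℕ
  | [] => 0
  | x :: l => l.countP (R x ·) + forwardArcs l

def crossArcs (X Y : List α) : ℕ :=
  (X.map fun x => Y.countP (R x ·)).sum

def IsMedianOrder (l : List α) : Prop :=
  ∀ l', l'.Perm l → forwardArcs R l' ≤ forwardArcs R l

theorem forwardArcs_append (X Y : List α) :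
    forwardArcs R (X ++ Y) = forwardArcs R X + forwardArcs R Y + crossArcs R X Y := by
  induction X with
  | nil => simp [forwardArcs, crossArcs]
  | cons x X ih =>
    simp only [List.cons_append, forwardArcs, crossArcs, List.map_cons, List.sum_cons,
      List.countP_append, ih] at *
    omega

theorem crossArcs_perm_left {X X' : List α} (h : X.Perm X') (Y : List α) :
    crossArcs R X Y = crossArcs R X' Y :=
  (h.map _).sum_eq

theorem crossArcs_perm_right (X : List α) {Y Y' : List α} (h : Y.Perm Y') :
    crossArcs R X Y = crossArcs R X Y' := by
  simp only [crossArcs, h.countP_eq]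

theorem crossArcs_singleton_right (X : List α) (u : α) :
    crossArcs R X [u] = X.countP (R · u) := by
  induction X with
  | nil => rfl
  | cons x X ih =>
    simp only [crossArcs, List.map_cons, List.sum_cons, List.countP_cons, List.countP_nil,
      zero_add] at ih ⊢
    rw [ih, add_comm]

theorem exists_perm_isMedianOrder (l₀ : List α) : ∃ l, l.Perm l₀ ∧ IsMedianOrder R l := by
  classical
  obtain ⟨l, hl, hmax⟩ :=
    l₀.permutations.toFinset.exists_max_image (forwardArcs R) ⟨l₀, by simp⟩
  rw [List.mem_toFinset, List.mem_permutations] at hl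
  exact ⟨l, hl, fun l' hl' => hmax l' (by simpa using hl'.trans hl)⟩

variable {R}

/-- The feedback property: moving `u` in front of a segment `m` that precedes it cannot raise the
number of forward arcs. -/
theorem IsMedianOrder.countP_le {l : List α} (hl : IsMedianOrder R l) {Z m : List α} {u : α}
    {C : List α} (h : l = Z ++ m ++ u :: C) : m.countP (R u ·) ≤ m.countP (R · u) := by
  have hperm : (u :: m).Perm (m ++ [u]) := (List.perm_append_singleton u m).symm
  have hmove := hl (Z ++ (u :: m ++ C)) (by simpa [h] using (hperm.append_right C).append_left Z)
  have hl' : l = Z ++ (m ++ [u] ++ C) := by simp [h]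
  rw [hl'] at hmove
  simp only [forwardArcs_append, crossArcs_perm_left R hperm,
    crossArcs_perm_right R Z (hperm.append_right C), crossArcs_singleton_right, forwardArcs,
    List.countP_nil] at hmove
  omega

end MedianOrder

section GoodCompletion

variable {V : Type*} (E : V → V → Prop)

/-- `Good E u v` says that `GoodArc E u v` or `GoodArc E v u` holds. -/
def GoodArc (u v : V) : Prop :=
  ∀ z, z ≠ u → z ≠ v → E z u → v ∈ Nplus E z ∪ Nplusplus E z

/-- Both orientations of a missing edge are added when both are good: median orders do not need a
tournament. -/
def goodCompletion (u v : V) : Prop :=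
  E u v ∨ (IsMissingEdge E u v ∧ GoodArc E u v)

variable {E}

theorem not_goodCompletion_of_mem_Nplus (hasym : ∀ x y, E x y → ¬ E y x) {f u x : V}
    (hu : u ∉ Nplus E f ∪ Nplusplus E f) (hx : x ∈ Nplus E f) : ¬ goodCompletion E x u := by
  have hxf : f ≠ x := fun h => hasym f f (h ▸ hx) (h ▸ hx)
  rintro (hxu | ⟨hmiss, hgood⟩)
  · by_cases huf : u = f
    · exact hasym f x hx (huf ▸ hxu)
    · exact hu (Or.inr ⟨fun h => hu (Or.inl h), huf, x, hx, hxu⟩)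
  · by_cases huf : u = f
    · exact hmiss.2.2 (huf ▸ hx)
    · exact hu (hgood f hxf (Ne.symm huf) hx)

theorem goodCompletion_of_mem_Nplus (hasym : ∀ x y, E x y → ¬ E y x)
    (hgood : ∀ u v, IsMissingEdge E u v → Good E u v) {f u x : V}
    (hu : u ∉ Nplus E f ∪ Nplusplus E f) (hx : x ∈ Nplus E f) : goodCompletion E u x := by
  have hxu := not_goodCompletion_of_mem_Nplus hasym hu hx
  by_cases hux : E u x
  · exact Or.inl hux
  have hmiss : IsMissingEdge E u x :=
    ⟨fun h => hu (Or.inl (h ▸ hx)), hux, fun h => hxu (Or.inl h)⟩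
  rcases hgood u x hmiss with hgood | hgood
  · exact Or.inr ⟨hmiss, hgood⟩
  · exact absurd (Or.inr ⟨⟨hmiss.1.symm, hmiss.2.2, hmiss.2.1⟩, fun z hzx hzu => hgood z hzu hzx⟩)
      hxu

end GoodCompletion

section SecondNeighborhood

variable {V : Type*} {E : V → V → Prop}

theorem hasSNP_of_isMedianOrder_goodCompletion [DecidableRel (goodCompletion E)]
    (hasym : ∀ x y, E x y → ¬ E y x) (hgood : ∀ u v, IsMissingEdge E u v → Good E u v)
    {l A : List V} {f : V} (hl : IsMedianOrder (goodCompletion E) l) (hnd : l.Nodup)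
    (hall : ∀ x, x ∈ l) (hlf : l = A ++ [f]) : HasSNP E f := by
  classical
  set P := Nplus E f
  set Q := Nplusplus E f
  have hf : f ∉ P ∪ Q := fun h => h.elim (fun h => hasym f f h h) (fun h => h.2.1 rfl)
  have hcount : A.countP (· ∈ P) ≤ A.countP (· ∈ Q) := by
    refine List.countP_le_countP_of_blocks (s := (· ∉ P ∪ Q)) (fun x hx h => hx (Or.inl h))
      ?_ hlf hf
    intro Z m u C hsplit hu hm
    calc m.countP (· ∈ P)
        ≤ m.countP (goodCompletion E u ·) := List.countP_mono_left fun x _ hx => by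
          simpa using goodCompletion_of_mem_Nplus hasym hgood hu (by simpa using hx)
      _ ≤ m.countP (goodCompletion E · u) := hl.countP_le hsplit
      _ ≤ m.countP (· ∈ Q) := List.countP_mono_left fun x hxm hx => by
          have hxP : x ∉ P := fun hxP =>
            not_goodCompletion_of_mem_Nplus hasym hu hxP (by simpa using hx)
          simpa [hxP] using hm x hxm
  have hA : A.Nodup := (hlf ▸ hnd).of_append_left
  have hsub : ∀ x ∈ P ∪ Q, x ∈ A := fun x hx => by
    have hxl := hall x
    rw [hlf, List.mem_append, List.mem_singleton] at hxl
    exact hxl.resolve_right fun hxf => hf (hxf ▸ hx)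
  rwa [List.countP_mem_eq_ncard hA fun x hx => hsub x (Or.inl hx),
    List.countP_mem_eq_ncard hA fun x hx => hsub x (Or.inr hx)] at hcount

theorem exists_hasSNP_of_forall_good [Fintype V] [Nonempty V] (hasym : ∀ x y, E x y → ¬ E y x)
    (hgood : ∀ u v, IsMissingEdge E u v → Good E u v) : ∃ v, HasSNP E v := by
  classical
  obtain ⟨l, hperm, hl⟩ := exists_perm_isMedianOrder (goodCompletion E) Finset.univ.toList
  have hall : ∀ x, x ∈ l := fun x => hperm.mem_iff.2 (Finset.mem_toList.2 (Finset.mem_univ x))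
  have hne : l ≠ [] := List.ne_nil_of_mem (hall (Classical.arbitrary V))
  exact ⟨_, hasSNP_of_isMedianOrder_goodCompletion hasym hgood hl
    (hperm.nodup_iff.2 (Finset.nodup_toList _)) hall (List.dropLast_append_getLast hne).symm⟩

theorem good_of_forall_isMissingEdge_not_adj {u : V} (v : V)
    (hu : ∀ z w, IsMissingEdge E z w → ¬ E z u) : Good E u v := by
  by_contra hbad
  simp only [Good, not_or, not_forall] at hbad
  obtain ⟨⟨z, hzu, hzv, hzu', hzv'⟩, ⟨w, hwu, hwv, hwv', hwu'⟩⟩ := hbad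
  have hzw : IsMissingEdge E z w :=
    ⟨fun h => hzv' (Or.inl (h ▸ hwv')),
      fun h => hzv' (Or.inr ⟨fun h' => hzv' (Or.inl h'), hzv.symm, w, h, hwv'⟩),
      fun h => hwu' (Or.inr ⟨fun h' => hwu' (Or.inl h'), hwu.symm, z, h, hzu'⟩)⟩
  exact hu z w hzw hzu'

theorem exists_hasSNP_of_isMissingEdge_not_adj [Fintype V] [Nonempty V]
    (hasym : ∀ x y, E x y → ¬ E y x)
    (hindep : ∀ x y z w, IsMissingEdge E x y → IsMissingEdge E z w → ¬ E x z) :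
    ∃ v, HasSNP E v :=
  exists_hasSNP_of_forall_good hasym fun _ _ huv =>
    good_of_forall_isMissingEdge_not_adj _ fun _ _ hzw => hindep _ _ _ _ hzw huv

end SecondNeighborhood

/-- every finite digraph whose missing graph is a cycle of
length 3 has a vertex with the second neighborhood property. -/
theorem snp_of_missing_C3 {V : Type*} [Fintype V]
    (E : V → V → Prop)
    (hasym : ∀ x y : V, E x y → ¬ E y x)
    (hC3 : ∃ a b c : V, [a, b, c].Pairwise (· ≠ ·) ∧
      ∀ u v : V, IsMissingEdge E u v ↔
        s(u, v) ∈ ({s(a, b), s(b, c), s(c, a)} : Set (Sym2 V))) :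
    ∃ v : V, HasSNP E v := by
  obtain ⟨a, b, c, -, hmiss⟩ := hC3
  have htri : ∀ u v, IsMissingEdge E u v → u = a ∨ u = b ∨ u = c := fun u v huv => by
    have := (hmiss u v).1 huv
    simp only [Set.mem_insert_iff, Set.mem_singleton_iff, Sym2.eq_iff] at this
    tauto
  have hnadj : ∀ x y, (x = a ∨ x = b ∨ x = c) → (y = a ∨ y = b ∨ y = c) → ¬ E x y := by
    have hab := ((hmiss a b).2 (by simp)).2
    have hbc := ((hmiss b c).2 (by simp)).2
    have hca := ((hmiss c a).2 (by simp)).2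
    have hirr : ∀ x, ¬ E x x := fun x h => hasym x x h h
    rintro x y (rfl | rfl | rfl) (rfl | rfl | rfl) <;> tauto
  have : Nonempty V := ⟨a⟩
  exact exists_hasSNP_of_isMissingEdge_not_adj hasym fun x y z w hxy hzw =>
    hnadj x z (htri x y hxy) (htri z w hzw)
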